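/- arXiv:2012.15468 — 2 statements merged into one kernel-verified Lean document; each statement's English description precedes it below -/
import Mathlib

section
/- Let m ≥ 1 and N ≥ 1 be integers and let F, K ∈ ℝ^{m×m} be such that F − K and F + (N−1)K are invertible. Let M ∈ ℝ^{Nm×Nm} be the block matrix whose N diagonal m×m blocks all equal F and whose off-diagonal m×m blocks all equal K. Then M is invertible and M⁻¹ is the block matrix whose diagonal m×m blocks all equal H and whose off-diagonal m×m blocks all equal E, where E = (1/N)[(F + (N−1)K)⁻¹ − (F − K)⁻¹] and H = E + (F − K)⁻¹. -/
open Matrix Set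

namespace LQ

/-- Frobenius norm of a real matrix. -/
noncomputable def frob {a b : Type*} [Fintype a] [Fintype b] (M : Matrix a b ℝ) : ℝ :=
  Real.sqrt (∑ i, ∑ j, (M i j) ^ 2)

/-- Entrywise ℓ₁ norm of a real matrix. -/
noncomputable def l1norm {a b : Type*} [Fintype a] [Fintype b] (M : Matrix a b ℝ) : ℝ :=
  ∑ i, ∑ j, |M i j|

/-- Block matrix with all diagonal m×m blocks equal to `F` and all off-diagonal blocks equal to `K`. -/
def blockConst (N m : ℕ) (F K : Matrix (Fin m) (Fin m) ℝ) :
    Matrix (Fin N × Fin m) (Fin N × Fin m) ℝ :=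
  Matrix.of fun x y => if x.1 = y.1 then F x.2 y.2 else K x.2 y.2

/-- Block matrix with diagonal blocks `Λ₁` and off-diagonal blocks `Λ₂ / N`. -/
noncomputable def blockPN (N n : ℕ) (Λ₁ Λ₂ : Matrix (Fin n) (Fin n) ℝ) :
    Matrix (Fin N × Fin n) (Fin N × Fin n) ℝ :=
  Matrix.of fun x y => if x.1 = y.1 then Λ₁ x.2 y.2 else Λ₂ x.2 y.2 / (N : ℝ)

/-- The permutation matrix exchanging the i-th and j-th block rows of `I_{Nn}`. -/
def Jswap (N n : ℕ) (i j : Fin N) : Matrix (Fin N × Fin n) (Fin N × Fin n) ℝ :=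
  Matrix.of fun x y => if y.1 = Equiv.swap i j x.1 ∧ y.2 = x.2 then 1 else 0

/-- `I_N ⊗ M`. -/
def kronIN (N : ℕ) {a b : ℕ} (M : Matrix (Fin a) (Fin b) ℝ) :
    Matrix (Fin N × Fin a) (Fin N × Fin b) ℝ :=
  Matrix.of fun x y => if x.1 = y.1 then M x.2 y.2 else 0

/-- `𝟏_{N×1} ⊗ M`. -/
def stackN (N : ℕ) {a b : ℕ} (M : Matrix (Fin a) (Fin b) ℝ) :
    Matrix (Fin N × Fin a) (Fin b) ℝ :=
  Matrix.of fun x y => M x.2 y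

/-- Data of the LQ mean field social optimization problem. -/
structure Params (n n₁ : ℕ) where
  A : Matrix (Fin n) (Fin n) ℝ
  G : Matrix (Fin n) (Fin n) ℝ
  Γ : Matrix (Fin n) (Fin n) ℝ
  Γf : Matrix (Fin n) (Fin n) ℝ
  B : Matrix (Fin n) (Fin n₁) ℝ
  B0 : Matrix (Fin n) (Fin n₁) ℝ
  B1 : Matrix (Fin n) (Fin n₁) ℝ
  D : Matrix (Fin n) (Fin 1) ℝ
  D0 : Matrix (Fin n) (Fin 1) ℝ
  Q : Matrix (Fin n) (Fin n) ℝ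
  Qf : Matrix (Fin n) (Fin n) ℝ
  R : Matrix (Fin n₁) (Fin n₁) ℝ
  T : ℝ

namespace Params

variable {n n₁ : ℕ} (p : Params n n₁)

/-- Standing hypotheses: positive dimensions, positive horizon, symmetric weights. -/
def Standing : Prop :=
  1 ≤ n ∧ 1 ≤ n₁ ∧ 0 < p.T ∧ p.Q.IsSymm ∧ p.Qf.IsSymm ∧ p.R.IsSymm

/-- Q^Γ = Γᵀ Q Γ − Q Γ − Γᵀ Q. -/
def QΓ : Matrix (Fin n) (Fin n) ℝ := p.Γᵀ * p.Q * p.Γ - p.Q * p.Γ - p.Γᵀ * p.Q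

/-- Q_f^Γ = Γ_fᵀ Q_f Γ_f − Q_f Γ_f − Γ_fᵀ Q_f. -/
def QfΓ : Matrix (Fin n) (Fin n) ℝ := p.Γfᵀ * p.Qf * p.Γf - p.Qf * p.Γf - p.Γfᵀ * p.Qf

/-- ℛ₁(Λ₁) = R + B₁ᵀ Λ₁ B₁. -/
def R1 (Λ₁ : Matrix (Fin n) (Fin n) ℝ) : Matrix (Fin n₁) (Fin n₁) ℝ :=
  p.R + p.B1ᵀ * Λ₁ * p.B1

/-- ℛ₂(Λ₁,Λ₂) = R + B₁ᵀ Λ₁ B₁ + B₀ᵀ(Λ₁+Λ₂)B₀. -/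
def R2 (Λ₁ Λ₂ : Matrix (Fin n) (Fin n) ℝ) : Matrix (Fin n₁) (Fin n₁) ℝ :=
  p.R + p.B1ᵀ * Λ₁ * p.B1 + p.B0ᵀ * (Λ₁ + Λ₂) * p.B0

/-- Ψ₁. -/
noncomputable def Ψ₁ (Λ₁ : Matrix (Fin n) (Fin n) ℝ) : Matrix (Fin n) (Fin n) ℝ :=
  Λ₁ * p.B * (p.R1 Λ₁)⁻¹ * p.Bᵀ * Λ₁ - Λ₁ * p.A - p.Aᵀ * Λ₁ - p.Q

/-- Ψ₂. -/
noncomputable def Ψ₂ (Λ₁ Λ₂ : Matrix (Fin n) (Fin n) ℝ) : Matrix (Fin n) (Fin n) ℝ :=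
  (Λ₁ + Λ₂) * p.B * (p.R2 Λ₁ Λ₂)⁻¹ * p.Bᵀ * (Λ₁ + Λ₂)
    - Λ₁ * p.B * (p.R1 Λ₁)⁻¹ * p.Bᵀ * Λ₁
    - (Λ₁ * p.G + Λ₂ * (p.A + p.G))
    - (p.Gᵀ * Λ₁ + (p.Aᵀ + p.Gᵀ) * Λ₂)
    - p.QΓ

/-- Solution of the limiting ODE system (ODE-Λ) on [0,T]. -/
noncomputable def IsSolLim (Λ₁ Λ₂ : ℝ → Matrix (Fin n) (Fin n) ℝ) : Prop :=
  (∀ t ∈ Icc (0 : ℝ) p.T, (Λ₁ t).IsSymm ∧ (Λ₂ t).IsSymm) ∧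
  (∀ t ∈ Icc (0 : ℝ) p.T, (p.R1 (Λ₁ t)).PosDef ∧ (p.R2 (Λ₁ t) (Λ₂ t)).PosDef) ∧
  Λ₁ p.T = p.Qf ∧ Λ₂ p.T = p.QfΓ ∧
  (∀ t ∈ Icc (0 : ℝ) p.T, ∀ i j, HasDerivWithinAt (fun s => Λ₁ s i j)
    (p.Ψ₁ (Λ₁ t) i j) (Icc (0 : ℝ) p.T) t) ∧
  (∀ t ∈ Icc (0 : ℝ) p.T, ∀ i j, HasDerivWithinAt (fun s => Λ₂ s i j)
    (p.Ψ₂ (Λ₁ t) (Λ₂ t) i j) (Icc (0 : ℝ) p.T) t)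

/-! Big (N-agent) matrices. -/

noncomputable def bigA (N : ℕ) : Matrix (Fin N × Fin n) (Fin N × Fin n) ℝ :=
  Matrix.of fun x y => (if x.1 = y.1 then p.A x.2 y.2 else 0) + p.G x.2 y.2 / (N : ℝ)

def bigBhat (N : ℕ) : Matrix (Fin N × Fin n) (Fin N × Fin n₁) ℝ :=
  Matrix.of fun x y => if x.1 = y.1 then p.B x.2 y.2 else 0

def bigB (N : ℕ) (i : Fin N) : Matrix (Fin N × Fin n) (Fin n₁) ℝ :=
  Matrix.of fun x l => if x.1 = i then p.B1 x.2 l else 0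

noncomputable def bigB0 (N : ℕ) : Matrix (Fin N × Fin n) (Fin n₁) ℝ :=
  Matrix.of fun x l => p.B0 x.2 l / (N : ℝ)

def bigD (N : ℕ) (i : Fin N) : Matrix (Fin N × Fin n) (Fin 1) ℝ :=
  Matrix.of fun x l => if x.1 = i then p.D x.2 l else 0

def bigD0 (N : ℕ) : Matrix (Fin N × Fin n) (Fin 1) ℝ :=
  Matrix.of fun x l => p.D0 x.2 l

def bigE (_p : Params n n₁) (N : ℕ) (i : Fin N) : Matrix (Fin n₁) (Fin N × Fin n₁) ℝ :=
  Matrix.of fun k y => if y.1 = i ∧ y.2 = k then 1 else 0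

def bigIhat (_p : Params n n₁) (N : ℕ) : Matrix (Fin n₁) (Fin N × Fin n₁) ℝ :=
  Matrix.of fun k y => if y.2 = k then 1 else 0

noncomputable def bigQ (N : ℕ) : Matrix (Fin N × Fin n) (Fin N × Fin n) ℝ :=
  Matrix.of fun x y => (if x.1 = y.1 then p.Q x.2 y.2 else 0) + p.QΓ x.2 y.2 / (N : ℝ)

noncomputable def bigQf (N : ℕ) : Matrix (Fin N × Fin n) (Fin N × Fin n) ℝ :=
  Matrix.of fun x y => (if x.1 = y.1 then p.Qf x.2 y.2 else 0) + p.QfΓ x.2 y.2 / (N : ℝ)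

def bigR (N : ℕ) : Matrix (Fin N × Fin n₁) (Fin N × Fin n₁) ℝ :=
  Matrix.of fun x y => if x.1 = y.1 then p.R x.2 y.2 else 0

/-- 𝓜₀. -/
noncomputable def M0 (N : ℕ) (Z : Matrix (Fin N × Fin n) (Fin N × Fin n) ℝ) :
    Matrix (Fin 1) (Fin 1) ℝ :=
  (1 / 2 : ℝ) • (∑ i : Fin N, (p.bigD N i)ᵀ * Z * p.bigD N i)
    + (1 / 2 : ℝ) • ((p.bigD0 N)ᵀ * Z * p.bigD0 N)

/-- 𝓜₁. -/
noncomputable def M1 (N : ℕ) (Z : Matrix (Fin N × Fin n) (Fin N × Fin n) ℝ) :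
    Matrix (Fin 1) (Fin N × Fin n₁) ℝ :=
  (∑ i : Fin N, (p.bigD N i)ᵀ * Z * p.bigB N i * p.bigE N i)
    + (p.bigD0 N)ᵀ * Z * p.bigB0 N * p.bigIhat N

/-- 𝓜₂. -/
noncomputable def M2 (N : ℕ) (Z : Matrix (Fin N × Fin n) (Fin N × Fin n) ℝ) :
    Matrix (Fin N × Fin n₁) (Fin N × Fin n₁) ℝ :=
  (1 / 2 : ℝ) • (∑ i : Fin N, (p.bigE N i)ᵀ * (p.bigB N i)ᵀ * Z * p.bigB N i * p.bigE N i)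
    + (1 / 2 : ℝ) • ((p.bigIhat N)ᵀ * (p.bigB0 N)ᵀ * Z * p.bigB0 N * p.bigIhat N)

/-- Right-hand side of the Riccati equation (ODE-P). -/
noncomputable def PRic (N : ℕ) (P : Matrix (Fin N × Fin n) (Fin N × Fin n) ℝ) :
    Matrix (Fin N × Fin n) (Fin N × Fin n) ℝ :=
  P * p.bigBhat N * (p.bigR N + (2 : ℝ) • p.M2 N P)⁻¹ * (p.bigBhat N)ᵀ * P
    - P * p.bigA N - (p.bigA N)ᵀ * P - p.bigQ N

/-- Solution of the large-scale Riccati equation (ODE-P) on [0,T]. -/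
noncomputable def IsSolP (N : ℕ) (P : ℝ → Matrix (Fin N × Fin n) (Fin N × Fin n) ℝ) : Prop :=
  (∀ t ∈ Icc (0 : ℝ) p.T, (P t).IsSymm) ∧
  (∀ t ∈ Icc (0 : ℝ) p.T, (p.bigR N + (2 : ℝ) • p.M2 N (P t)).PosDef) ∧
  P p.T = p.bigQf N ∧
  (∀ t ∈ Icc (0 : ℝ) p.T, ∀ x y, HasDerivWithinAt (fun s => P s x y)
    (p.PRic N (P t) x y) (Icc (0 : ℝ) p.T) t)

/-- Solution of the companion linear equation (ODE-S) on [0,T], relative to `P`. -/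
noncomputable def IsSolS (N : ℕ) (P : ℝ → Matrix (Fin N × Fin n) (Fin N × Fin n) ℝ)
    (S : ℝ → Matrix (Fin N × Fin n) (Fin 1) ℝ) : Prop :=
  S p.T = 0 ∧
  (∀ t ∈ Icc (0 : ℝ) p.T, ∀ x y, HasDerivWithinAt (fun s => S s x y)
    ((P t * p.bigBhat N * (p.bigR N + (2 : ℝ) • p.M2 N (P t))⁻¹ *
        ((p.bigBhat N)ᵀ * S t + (p.M1 N (P t))ᵀ) - (p.bigA N)ᵀ * S t) x y)
    (Icc (0 : ℝ) p.T) t)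

/-- Solution of the companion scalar equation (ODE-r) on [0,T], relative to `P` and `S`. -/
noncomputable def IsSolr (N : ℕ) (P : ℝ → Matrix (Fin N × Fin n) (Fin N × Fin n) ℝ)
    (S : ℝ → Matrix (Fin N × Fin n) (Fin 1) ℝ) (r : ℝ → ℝ) : Prop :=
  r p.T = 0 ∧
  (∀ t ∈ Icc (0 : ℝ) p.T, HasDerivWithinAt r
    (((((S t)ᵀ * p.bigBhat N + p.M1 N (P t)) * (p.bigR N + (2 : ℝ) • p.M2 N (P t))⁻¹ *
        ((p.bigBhat N)ᵀ * S t + (p.M1 N (P t))ᵀ)) - (2 : ℝ) • p.M0 N (P t)) 0 0)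
    (Icc (0 : ℝ) p.T) t)

/-- Asymptotic solvability of the LQ mean field social optimization problem. -/
noncomputable def AsympSolvable : Prop :=
  ∃ N₀ : ℕ, 1 ≤ N₀ ∧ ∃ c₀ : ℝ, 0 < c₀ ∧ ∃ C : ℝ,
    ∀ N : ℕ, N₀ ≤ N →
      ∃ P : ℝ → Matrix (Fin N × Fin n) (Fin N × Fin n) ℝ,
        p.IsSolP N P ∧
        (∀ t ∈ Icc (0 : ℝ) p.T, l1norm (P t) / (N : ℝ) ≤ C) ∧
        (∀ t ∈ Icc (0 : ℝ) p.T,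
          (p.bigR N + (2 : ℝ) • p.M2 N (P t) - c₀ • 1).PosSemidef)

/-! The rescaled low-dimensional system. -/

/-- E^N. -/
noncomputable def EN (N : ℕ) (Λ₁ Λ₂ : Matrix (Fin n) (Fin n) ℝ) :
    Matrix (Fin n₁) (Fin n₁) ℝ :=
  (1 / (N : ℝ)) •
    ((p.R2 Λ₁ Λ₂ - (1 / (N : ℝ)) • (p.B0ᵀ * Λ₂ * p.B0))⁻¹ - (p.R1 Λ₁)⁻¹)

/-- H^N. -/
noncomputable def HN (N : ℕ) (Λ₁ Λ₂ : Matrix (Fin n) (Fin n) ℝ) :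
    Matrix (Fin n₁) (Fin n₁) ℝ :=
  p.EN N Λ₁ Λ₂ + (p.R1 Λ₁)⁻¹

/-- g₁. -/
noncomputable def g₁ (N : ℕ) (Λ₁ Λ₂ : Matrix (Fin n) (Fin n) ℝ) :
    Matrix (Fin n) (Fin n) ℝ :=
  Λ₁ * p.B * p.EN N Λ₁ Λ₂ * p.Bᵀ * Λ₁
  + (1 - 1 / (N : ℝ)) •
      (Λ₂ * p.B * p.EN N Λ₁ Λ₂ * p.Bᵀ * Λ₁ + Λ₁ * p.B * p.EN N Λ₁ Λ₂ * p.Bᵀ * Λ₂)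
  + (1 / (N : ℝ) - 1 / (N : ℝ) ^ 2) •
      (Λ₂ * p.B * (p.HN N Λ₁ Λ₂ + ((N : ℝ) - 2) • p.EN N Λ₁ Λ₂) * p.Bᵀ * Λ₂)
  - (1 / (N : ℝ)) •
      ((Λ₁ * p.G + p.Gᵀ * Λ₁) + (1 - 1 / (N : ℝ)) • (Λ₂ * p.G + p.Gᵀ * Λ₂))
  - (1 / (N : ℝ)) • p.QΓ

/-- g₂. -/
noncomputable def g₂ (N : ℕ) (Λ₁ Λ₂ : Matrix (Fin n) (Fin n) ℝ) :
    Matrix (Fin n) (Fin n) ℝ :=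
  (Λ₁ + Λ₂) * p.B *
      ((N : ℝ) • p.EN N Λ₁ Λ₂ + (p.R1 Λ₁)⁻¹ - (p.R2 Λ₁ Λ₂)⁻¹) * p.Bᵀ * (Λ₁ + Λ₂)
  - (2 / (N : ℝ)) • (Λ₂ * p.B * (p.R1 Λ₁)⁻¹ * p.Bᵀ * Λ₂)
  + (1 / (N : ℝ) - 2) • (Λ₂ * p.B * p.EN N Λ₁ Λ₂ * p.Bᵀ * Λ₂)
  - Λ₁ * p.B * p.EN N Λ₁ Λ₂ * p.Bᵀ * Λ₂
  - Λ₂ * p.B * p.EN N Λ₁ Λ₂ * p.Bᵀ * Λ₁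
  + (1 / (N : ℝ)) • (Λ₂ * p.G + p.Gᵀ * Λ₂)

/-- Solution of the rescaled system (ODE-Λ^N) on [0,T]. -/
noncomputable def IsSolLamN (N : ℕ) (Λ₁ Λ₂ : ℝ → Matrix (Fin n) (Fin n) ℝ) : Prop :=
  (∀ t ∈ Icc (0 : ℝ) p.T, (Λ₁ t).IsSymm ∧ (Λ₂ t).IsSymm) ∧
  (∀ t ∈ Icc (0 : ℝ) p.T, (p.R1 (Λ₁ t)).PosDef ∧ (p.R2 (Λ₁ t) (Λ₂ t)).PosDef ∧
    (p.R2 (Λ₁ t) (Λ₂ t) - (1 / (N : ℝ)) • (p.B0ᵀ * Λ₂ t * p.B0)).PosDef) ∧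
  Λ₁ p.T = p.Qf + (1 / (N : ℝ)) • p.QfΓ ∧ Λ₂ p.T = p.QfΓ ∧
  (∀ t ∈ Icc (0 : ℝ) p.T, ∀ i j, HasDerivWithinAt (fun s => Λ₁ s i j)
    ((p.Ψ₁ (Λ₁ t) + p.g₁ N (Λ₁ t) (Λ₂ t)) i j) (Icc (0 : ℝ) p.T) t) ∧
  (∀ t ∈ Icc (0 : ℝ) p.T, ∀ i j, HasDerivWithinAt (fun s => Λ₂ s i j)
    ((p.Ψ₂ (Λ₁ t) (Λ₂ t) + p.g₂ N (Λ₁ t) (Λ₂ t)) i j) (Icc (0 : ℝ) p.T) t)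

/-! Companion (mean-field) equations. -/

/-- φ₁. -/
noncomputable def φ₁ (Λ₁ Λ₂ : Matrix (Fin n) (Fin n) ℝ) (S : Matrix (Fin n) (Fin 1) ℝ) :
    Matrix (Fin n) (Fin 1) ℝ :=
  (Λ₁ + Λ₂) * p.B * (p.R2 Λ₁ Λ₂)⁻¹ *
      (p.Bᵀ * S + p.B1ᵀ * Λ₁ * p.D + p.B0ᵀ * (Λ₁ + Λ₂) * p.D0)
    - (p.A + p.G)ᵀ * S

/-- φ₂. -/
noncomputable def φ₂ (Λ₁ Λ₂ : Matrix (Fin n) (Fin n) ℝ) (S : Matrix (Fin n) (Fin 1) ℝ) :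
    Matrix (Fin 1) (Fin 1) ℝ :=
  (Sᵀ * p.B + p.Dᵀ * Λ₁ * p.B1 + p.D0ᵀ * (Λ₁ + Λ₂) * p.B0) * (p.R2 Λ₁ Λ₂)⁻¹ *
      (p.Bᵀ * S + p.B1ᵀ * Λ₁ * p.D + p.B0ᵀ * (Λ₁ + Λ₂) * p.D0)
    - p.Dᵀ * Λ₁ * p.D - p.D0ᵀ * (Λ₁ + Λ₂) * p.D0

/-- Solution of the limiting companion system (ODE-Sr) on [0,T]. -/
noncomputable def IsSolSr (Λ₁ Λ₂ : ℝ → Matrix (Fin n) (Fin n) ℝ)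
    (S : ℝ → Matrix (Fin n) (Fin 1) ℝ) (r : ℝ → ℝ) : Prop :=
  S p.T = 0 ∧ r p.T = 0 ∧
  (∀ t ∈ Icc (0 : ℝ) p.T, ∀ i j, HasDerivWithinAt (fun s => S s i j)
    (p.φ₁ (Λ₁ t) (Λ₂ t) (S t) i j) (Icc (0 : ℝ) p.T) t) ∧
  (∀ t ∈ Icc (0 : ℝ) p.T, HasDerivWithinAt r
    ((p.φ₂ (Λ₁ t) (Λ₂ t) (S t)) 0 0) (Icc (0 : ℝ) p.T) t)

/-- g₀₁. -/
noncomputable def g01 (N : ℕ) (Λ₁ Λ₂ : Matrix (Fin n) (Fin n) ℝ)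
    (S : Matrix (Fin n) (Fin 1) ℝ) : Matrix (Fin n) (Fin 1) ℝ :=
  (Λ₁ + (1 - 1 / (N : ℝ)) • Λ₂) * p.B *
      (p.R2 Λ₁ Λ₂ - (1 / (N : ℝ)) • (p.B0ᵀ * Λ₂ * p.B0))⁻¹ *
      (p.Bᵀ * S + p.B1ᵀ * Λ₁ * p.D + p.B0ᵀ * (Λ₁ + (1 - 1 / (N : ℝ)) • Λ₂) * p.D0)
  - (Λ₁ + Λ₂) * p.B * (p.R2 Λ₁ Λ₂)⁻¹ *
      (p.Bᵀ * S + p.B1ᵀ * Λ₁ * p.D + p.B0ᵀ * (Λ₁ + Λ₂) * p.D0)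

/-- g₀₂. -/
noncomputable def g02 (N : ℕ) (Λ₁ Λ₂ : Matrix (Fin n) (Fin n) ℝ)
    (S : Matrix (Fin n) (Fin 1) ℝ) : Matrix (Fin 1) (Fin 1) ℝ :=
  (Sᵀ * p.B + p.Dᵀ * Λ₁ * p.B1 + p.D0ᵀ * (Λ₁ + (1 - 1 / (N : ℝ)) • Λ₂) * p.B0) *
      (p.R2 Λ₁ Λ₂ - (1 / (N : ℝ)) • (p.B0ᵀ * Λ₂ * p.B0))⁻¹ *
      (p.Bᵀ * S + p.B1ᵀ * Λ₁ * p.D + p.B0ᵀ * (Λ₁ + (1 - 1 / (N : ℝ)) • Λ₂) * p.D0)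
  - (Sᵀ * p.B + p.Dᵀ * Λ₁ * p.B1 + p.D0ᵀ * (Λ₁ + Λ₂) * p.B0) * (p.R2 Λ₁ Λ₂)⁻¹ *
      (p.Bᵀ * S + p.B1ᵀ * Λ₁ * p.D + p.B0ᵀ * (Λ₁ + Λ₂) * p.D0)
  + (1 / (N : ℝ)) • (p.D0ᵀ * Λ₂ * p.D0)

/-- Solution of the rescaled companion system (ODE-S^N r^N) on [0,T]. -/
noncomputable def IsSolSrN (N : ℕ) (Λ₁ Λ₂ : ℝ → Matrix (Fin n) (Fin n) ℝ)
    (S : ℝ → Matrix (Fin n) (Fin 1) ℝ) (r : ℝ → ℝ) : Prop :=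
  S p.T = 0 ∧ r p.T = 0 ∧
  (∀ t ∈ Icc (0 : ℝ) p.T, ∀ i j, HasDerivWithinAt (fun s => S s i j)
    ((p.φ₁ (Λ₁ t) (Λ₂ t) (S t) + p.g01 N (Λ₁ t) (Λ₂ t) (S t)) i j) (Icc (0 : ℝ) p.T) t) ∧
  (∀ t ∈ Icc (0 : ℝ) p.T, HasDerivWithinAt r
    ((p.φ₂ (Λ₁ t) (Λ₂ t) (S t) + p.g02 N (Λ₁ t) (Λ₂ t) (S t)) 0 0) (Icc (0 : ℝ) p.T) t)

/-! Feedback gains. -/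

/-- Θ = ℛ₁(Λ₁)⁻¹ Bᵀ Λ₁. -/
noncomputable def Theta (Λ₁ : Matrix (Fin n) (Fin n) ℝ) : Matrix (Fin n₁) (Fin n) ℝ :=
  (p.R1 Λ₁)⁻¹ * p.Bᵀ * Λ₁

/-- Θ₁ = (H₁ − H)Bᵀ(Λ₁+Λ₂) + HBᵀΛ₂. -/
noncomputable def Theta1 (Λ₁ Λ₂ : Matrix (Fin n) (Fin n) ℝ) : Matrix (Fin n₁) (Fin n) ℝ :=
  ((p.R2 Λ₁ Λ₂)⁻¹ - (p.R1 Λ₁)⁻¹) * p.Bᵀ * (Λ₁ + Λ₂) + (p.R1 Λ₁)⁻¹ * p.Bᵀ * Λ₂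

/-- Θ₂ = H₁[BᵀS + B₁ᵀΛ₁D + B₀ᵀ(Λ₁+Λ₂)D₀]. -/
noncomputable def Theta2 (Λ₁ Λ₂ : Matrix (Fin n) (Fin n) ℝ) (S : Matrix (Fin n) (Fin 1) ℝ) :
    Matrix (Fin n₁) (Fin 1) ℝ :=
  (p.R2 Λ₁ Λ₂)⁻¹ * (p.Bᵀ * S + p.B1ᵀ * Λ₁ * p.D + p.B0ᵀ * (Λ₁ + Λ₂) * p.D0)

/-- Θ^N. -/
noncomputable def ThetaN (N : ℕ) (Λ₁ Λ₂ : Matrix (Fin n) (Fin n) ℝ) :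
    Matrix (Fin n₁) (Fin n) ℝ :=
  (p.HN N Λ₁ Λ₂ - p.EN N Λ₁ Λ₂) * p.Bᵀ * (Λ₁ - (1 / (N : ℝ)) • Λ₂)

/-- Θ₁^N. -/
noncomputable def Theta1N (N : ℕ) (Λ₁ Λ₂ : Matrix (Fin n) (Fin n) ℝ) :
    Matrix (Fin n₁) (Fin n) ℝ :=
  (N : ℝ) • (p.EN N Λ₁ Λ₂ * p.Bᵀ * Λ₁)
    + (p.HN N Λ₁ Λ₂ + ((N : ℝ) - 2) • p.EN N Λ₁ Λ₂) * p.Bᵀ * Λ₂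

/-- Θ₂^N. -/
noncomputable def Theta2N (N : ℕ) (Λ₁ Λ₂ : Matrix (Fin n) (Fin n) ℝ)
    (S : Matrix (Fin n) (Fin 1) ℝ) : Matrix (Fin n₁) (Fin 1) ℝ :=
  (p.HN N Λ₁ Λ₂ + ((N : ℝ) - 1) • p.EN N Λ₁ Λ₂) *
    (p.Bᵀ * S + p.B1ᵀ * Λ₁ * p.D + p.B0ᵀ * (Λ₁ + (1 - 1 / (N : ℝ)) • Λ₂) * p.D0)

/-- Z₀ = −B₀(Θ + Θ₁). -/
noncomputable def Z0 (Λ₁ Λ₂ : Matrix (Fin n) (Fin n) ℝ) : Matrix (Fin n) (Fin n) ℝ :=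
  -(p.B0 * (p.Theta Λ₁ + p.Theta1 Λ₁ Λ₂))

/-- Z₁ = A + G − B(Θ + Θ₁). -/
noncomputable def Z1 (Λ₁ Λ₂ : Matrix (Fin n) (Fin n) ℝ) : Matrix (Fin n) (Fin n) ℝ :=
  p.A + p.G - p.B * (p.Theta Λ₁ + p.Theta1 Λ₁ Λ₂)

/-! The high-dimensional equations under the decentralized control. -/

/-- RHS of (ODE-P̌₁) (paper's −d𝐏̌₁/dt). -/
noncomputable def Pcheck1RHS (N : ℕ) (Θ : Matrix (Fin n₁) (Fin n) ℝ)
    (P1 : Matrix (Fin N × Fin n) (Fin N × Fin n) ℝ) :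
    Matrix (Fin N × Fin n) (Fin N × Fin n) ℝ :=
  (kronIN N Θ)ᵀ * (p.bigR N + p.M2 N ((2 : ℝ) • P1)) * kronIN N Θ
    + P1 * (p.bigA N - p.bigBhat N * kronIN N Θ)
    + (p.bigA N - p.bigBhat N * kronIN N Θ)ᵀ * P1
    + p.bigQ N

/-- Solution of (ODE-P̌₁) on [0,T], with Θ(t) built from Λ₁(t). -/
noncomputable def IsSolPcheck1 (N : ℕ) (Λ₁ : ℝ → Matrix (Fin n) (Fin n) ℝ)
    (P1 : ℝ → Matrix (Fin N × Fin n) (Fin N × Fin n) ℝ) : Prop :=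
  P1 p.T = p.bigQf N ∧
  (∀ t ∈ Icc (0 : ℝ) p.T, ∀ x y, HasDerivWithinAt (fun s => P1 s x y)
    ((-(p.Pcheck1RHS N (p.Theta (Λ₁ t)) (P1 t))) x y) (Icc (0 : ℝ) p.T) t)

/-- RHS of (ODE-P̌₁₂) (paper's −d𝐏̌₁₂/dt). -/
noncomputable def Pcheck12RHS (N : ℕ) (Λ₁m Λ₂m : Matrix (Fin n) (Fin n) ℝ)
    (P1 : Matrix (Fin N × Fin n) (Fin N × Fin n) ℝ)
    (P12 : Matrix (Fin N × Fin n) (Fin n) ℝ) :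
    Matrix (Fin N × Fin n) (Fin n) ℝ :=
  (kronIN N (p.Theta Λ₁m))ᵀ * (p.bigR N + p.M2 N ((2 : ℝ) • P1)) *
      stackN N (p.Theta1 Λ₁m Λ₂m)
    - P1 * p.bigBhat N * stackN N (p.Theta1 Λ₁m Λ₂m)
    + ((p.bigA N)ᵀ - (kronIN N (p.Theta Λ₁m))ᵀ * (p.bigBhat N)ᵀ) * P12
    + P12 * p.Z1 Λ₁m Λ₂m
    - (kronIN N (p.Theta Λ₁m))ᵀ * (p.bigIhat N)ᵀ * (p.bigB0 N)ᵀ * P12 * p.Z0 Λ₁m Λ₂m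

/-- Solution of (ODE-P̌₁₂) on [0,T]. -/
noncomputable def IsSolPcheck12 (N : ℕ) (Λ₁ Λ₂ : ℝ → Matrix (Fin n) (Fin n) ℝ)
    (P1 : ℝ → Matrix (Fin N × Fin n) (Fin N × Fin n) ℝ)
    (P12 : ℝ → Matrix (Fin N × Fin n) (Fin n) ℝ) : Prop :=
  P12 p.T = 0 ∧
  (∀ t ∈ Icc (0 : ℝ) p.T, ∀ x y, HasDerivWithinAt (fun s => P12 s x y)
    ((-(p.Pcheck12RHS N (Λ₁ t) (Λ₂ t) (P1 t) (P12 t))) x y) (Icc (0 : ℝ) p.T) t)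

/-! The decentralized-control low-dimensional coefficient system. -/

/-- ǧ₁. -/
noncomputable def gc1 (N : ℕ) (Θ : Matrix (Fin n₁) (Fin n) ℝ)
    (L1 L2 : Matrix (Fin n) (Fin n) ℝ) : Matrix (Fin n) (Fin n) ℝ :=
  (1 / (N : ℝ)) •
    (Θᵀ * p.B0ᵀ * (L1 + (1 - 1 / (N : ℝ)) • L2) * p.B0 * Θ
      + (L1 + (1 - 1 / (N : ℝ)) • L2) * p.G
      + p.Gᵀ * (L1 + (1 - 1 / (N : ℝ)) • L2)
      + p.QΓ)

/-- ǧ₂. -/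
noncomputable def gc2 (N : ℕ) (Θ : Matrix (Fin n₁) (Fin n) ℝ)
    (L2 : Matrix (Fin n) (Fin n) ℝ) : Matrix (Fin n) (Fin n) ℝ :=
  -((1 / (N : ℝ)) • (Θᵀ * p.B0ᵀ * L2 * p.B0 * Θ + L2 * p.G + p.Gᵀ * L2))

/-- ǧ₁₂. -/
noncomputable def gc12 (N : ℕ) (Θ Θ₁ : Matrix (Fin n₁) (Fin n) ℝ)
    (L2 : Matrix (Fin n) (Fin n) ℝ) : Matrix (Fin n) (Fin n) ℝ :=
  (1 / (N : ℝ)) • (-(Θᵀ * p.B0ᵀ * L2 * p.B0 * Θ₁) + L2 * p.B * Θ₁)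

/-- ǧ₂₂. -/
noncomputable def gc22 (N : ℕ) (Θ₁ : Matrix (Fin n₁) (Fin n) ℝ)
    (L2 : Matrix (Fin n) (Fin n) ℝ) : Matrix (Fin n) (Fin n) ℝ :=
  -((1 / (N : ℝ)) • (Θ₁ᵀ * p.B0ᵀ * L2 * p.B0 * Θ₁))

/-- ǧ₀₁. -/
noncomputable def gc01 (N : ℕ) (Θ : Matrix (Fin n₁) (Fin n) ℝ)
    (Θ₂ : Matrix (Fin n₁) (Fin 1) ℝ) (L2 : Matrix (Fin n) (Fin n) ℝ) :
    Matrix (Fin n) (Fin 1) ℝ :=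
  (1 / (N : ℝ)) • (Θᵀ * p.B0ᵀ * L2 * (p.D0 - p.B0 * Θ₂) + L2 * p.B * Θ₂)

/-- ǧ₀₂. -/
noncomputable def gc02 (N : ℕ) (Θ₁ : Matrix (Fin n₁) (Fin n) ℝ)
    (Θ₂ : Matrix (Fin n₁) (Fin 1) ℝ) (L2 : Matrix (Fin n) (Fin n) ℝ) :
    Matrix (Fin n) (Fin 1) ℝ :=
  (1 / (N : ℝ)) • (-(Θ₁ᵀ * p.B0ᵀ * L2 * p.B0 * Θ₂) + Θ₁ᵀ * p.B0ᵀ * L2 * p.D0)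

/-- RHS of (ODE-Λ̌₁^N) (paper's −dΛ̌₁^N/dt). -/
noncomputable def check1RHS (N : ℕ) (Θ : Matrix (Fin n₁) (Fin n) ℝ)
    (L1 L2 : Matrix (Fin n) (Fin n) ℝ) : Matrix (Fin n) (Fin n) ℝ :=
  Θᵀ * p.R1 L1 * Θ + L1 * (p.A - p.B * Θ) + (p.A - p.B * Θ)ᵀ * L1 + p.Q
    + p.gc1 N Θ L1 L2

/-- RHS of (ODE-Λ̌₂^N). -/
noncomputable def check2RHS (N : ℕ) (Θ : Matrix (Fin n₁) (Fin n) ℝ)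
    (L1 L2 : Matrix (Fin n) (Fin n) ℝ) : Matrix (Fin n) (Fin n) ℝ :=
  Θᵀ * p.B0ᵀ * (L1 + L2) * p.B0 * Θ + L1 * p.G + p.Gᵀ * L1
    + L2 * (p.A + p.G - p.B * Θ) + (p.A + p.G - p.B * Θ)ᵀ * L2 + p.QΓ
    + p.gc2 N Θ L2

/-- RHS of (ODE-Λ̌₁₂^N). -/
noncomputable def check12RHS (N : ℕ) (Θ Θ₁ : Matrix (Fin n₁) (Fin n) ℝ)
    (L1 L2 L12 : Matrix (Fin n) (Fin n) ℝ) : Matrix (Fin n) (Fin n) ℝ :=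
  Θᵀ * p.R2 L1 L2 * Θ₁ + Θᵀ * p.B0ᵀ * L12 * p.B0 * (Θ + Θ₁)
    - (L1 + L2) * p.B * Θ₁
    + (p.A + p.G - p.B * Θ)ᵀ * L12
    + L12 * (p.A + p.G - p.B * (Θ₁ + Θ))
    + p.gc12 N Θ Θ₁ L2

/-- RHS of (ODE-Λ̌₂₂^N). -/
noncomputable def check22RHS (N : ℕ) (Θ₁ : Matrix (Fin n₁) (Fin n) ℝ)
    (Z₀ Z₁ : Matrix (Fin n) (Fin n) ℝ)
    (L1 L2 L12 L22 : Matrix (Fin n) (Fin n) ℝ) : Matrix (Fin n) (Fin n) ℝ :=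
  Θ₁ᵀ * p.R2 L1 L2 * Θ₁ - L12ᵀ * p.B * Θ₁ - Θ₁ᵀ * p.Bᵀ * L12
    + L22 * Z₁ + Z₁ᵀ * L22
    - Z₀ᵀ * L12ᵀ * p.B0 * Θ₁ - Θ₁ᵀ * p.B0ᵀ * L12 * Z₀
    + Z₀ᵀ * L22 * Z₀ + p.gc22 N Θ₁ L2

/-- RHS of (ODE-Š₁^N). -/
noncomputable def checkS1RHS (N : ℕ) (Θ : Matrix (Fin n₁) (Fin n) ℝ)
    (Θ₂ : Matrix (Fin n₁) (Fin 1) ℝ) (L1 L2 L12 : Matrix (Fin n) (Fin n) ℝ)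
    (S1 : Matrix (Fin n) (Fin 1) ℝ) : Matrix (Fin n) (Fin 1) ℝ :=
  Θᵀ * p.R2 L1 L2 * Θ₂ - (L1 + L2 + L12) * p.B * Θ₂
    - Θᵀ * (p.Bᵀ * S1 + p.B1ᵀ * L1 * p.D + p.B0ᵀ * (L1 + L2) * p.D0)
    - Θᵀ * p.B0ᵀ * L12 * (p.D0 - p.B0 * Θ₂)
    + (p.A + p.G)ᵀ * S1
    + p.gc01 N Θ Θ₂ L2

/-- RHS of (ODE-Š₂^N). -/
noncomputable def checkS2RHS (N : ℕ) (Θ₁ : Matrix (Fin n₁) (Fin n) ℝ)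
    (Θ₂ : Matrix (Fin n₁) (Fin 1) ℝ) (Z₀ Z₁ : Matrix (Fin n) (Fin n) ℝ)
    (L1 L2 L12 L22 : Matrix (Fin n) (Fin n) ℝ)
    (S1 S2 : Matrix (Fin n) (Fin 1) ℝ) : Matrix (Fin n) (Fin 1) ℝ :=
  Θ₁ᵀ * p.R2 L1 L2 * Θ₂ + Z₁ᵀ * S2
    - Θ₁ᵀ * (p.Bᵀ * S1 + p.B1ᵀ * L1 * p.D + p.B0ᵀ * (L1 + L2) * p.D0)
    + (Z₀ᵀ * L22 + Z₀ᵀ * L12ᵀ - Θ₁ᵀ * p.B0ᵀ * L12) * (p.D0 - p.B0 * Θ₂)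
    - (L12ᵀ + L22) * p.B * Θ₂
    + p.gc02 N Θ₁ Θ₂ L2

/-- Solution of the pair (ODE-Λ̌₁^N)–(ODE-Λ̌₂^N) on [0,T], with Θ(t) from the limiting Λ₁. -/
noncomputable def IsSolCheckA (N : ℕ) (Λ₁ : ℝ → Matrix (Fin n) (Fin n) ℝ)
    (L1 L2 : ℝ → Matrix (Fin n) (Fin n) ℝ) : Prop :=
  L1 p.T = p.Qf + (1 / (N : ℝ)) • p.QfΓ ∧ L2 p.T = p.QfΓ ∧
  (∀ t ∈ Icc (0 : ℝ) p.T, ∀ i j, HasDerivWithinAt (fun s => L1 s i j)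
    ((-(p.check1RHS N (p.Theta (Λ₁ t)) (L1 t) (L2 t))) i j) (Icc (0 : ℝ) p.T) t) ∧
  (∀ t ∈ Icc (0 : ℝ) p.T, ∀ i j, HasDerivWithinAt (fun s => L2 s i j)
    ((-(p.check2RHS N (p.Theta (Λ₁ t)) (L1 t) (L2 t))) i j) (Icc (0 : ℝ) p.T) t)

/-- Solution of (ODE-Λ̌₁^N)–(ODE-Λ̌₂₂^N) on [0,T], with Θ, Θ₁, Z₀, Z₁ from the limiting (Λ₁, Λ₂). -/
noncomputable def IsSolCheckB (N : ℕ) (Λ₁ Λ₂ : ℝ → Matrix (Fin n) (Fin n) ℝ)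
    (L1 L2 L12 L22 : ℝ → Matrix (Fin n) (Fin n) ℝ) : Prop :=
  p.IsSolCheckA N Λ₁ L1 L2 ∧
  L12 p.T = 0 ∧ L22 p.T = 0 ∧
  (∀ t ∈ Icc (0 : ℝ) p.T, ∀ i j, HasDerivWithinAt (fun s => L12 s i j)
    ((-(p.check12RHS N (p.Theta (Λ₁ t)) (p.Theta1 (Λ₁ t) (Λ₂ t))
        (L1 t) (L2 t) (L12 t))) i j) (Icc (0 : ℝ) p.T) t) ∧
  (∀ t ∈ Icc (0 : ℝ) p.T, ∀ i j, HasDerivWithinAt (fun s => L22 s i j)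
    ((-(p.check22RHS N (p.Theta1 (Λ₁ t) (Λ₂ t)) (p.Z0 (Λ₁ t) (Λ₂ t))
        (p.Z1 (Λ₁ t) (Λ₂ t)) (L1 t) (L2 t) (L12 t) (L22 t))) i j) (Icc (0 : ℝ) p.T) t)

/-- Solution of the full decentralized coefficient system on [0,T],
with Θ, Θ₁, Θ₂, Z₀, Z₁ from the limiting (Λ₁, Λ₂, S). -/
noncomputable def IsSolCheckC (N : ℕ) (Λ₁ Λ₂ : ℝ → Matrix (Fin n) (Fin n) ℝ)
    (S : ℝ → Matrix (Fin n) (Fin 1) ℝ)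
    (L1 L2 L12 L22 : ℝ → Matrix (Fin n) (Fin n) ℝ)
    (S1 S2 : ℝ → Matrix (Fin n) (Fin 1) ℝ) : Prop :=
  p.IsSolCheckB N Λ₁ Λ₂ L1 L2 L12 L22 ∧
  S1 p.T = 0 ∧ S2 p.T = 0 ∧
  (∀ t ∈ Icc (0 : ℝ) p.T, ∀ i j, HasDerivWithinAt (fun s => S1 s i j)
    ((-(p.checkS1RHS N (p.Theta (Λ₁ t)) (p.Theta2 (Λ₁ t) (Λ₂ t) (S t))
        (L1 t) (L2 t) (L12 t) (S1 t))) i j) (Icc (0 : ℝ) p.T) t) ∧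
  (∀ t ∈ Icc (0 : ℝ) p.T, ∀ i j, HasDerivWithinAt (fun s => S2 s i j)
    ((-(p.checkS2RHS N (p.Theta1 (Λ₁ t) (Λ₂ t)) (p.Theta2 (Λ₁ t) (Λ₂ t) (S t))
        (p.Z0 (Λ₁ t) (Λ₂ t)) (p.Z1 (Λ₁ t) (Λ₂ t))
        (L1 t) (L2 t) (L12 t) (L22 t) (S1 t) (S2 t))) i j) (Icc (0 : ℝ) p.T) t)

end Params

/-! Writing `J` for the all-ones matrix `of 1`, the block matrix is `1 ⊗ₖ (F - K) + J ⊗ₖ K`.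
Since `J * J = N • J`, matrices of the form `1 ⊗ₖ A + J ⊗ₖ B` are closed under multiplication,
with the `1`-part multiplying on its own; the candidate inverse `1 ⊗ₖ (F - K)⁻¹ + J ⊗ₖ E` is
therefore a right inverse as soon as the `J`-part of the product vanishes, which comes down to
`(F + (N - 1) K) E = -K (F - K)⁻¹`. -/

open scoped Kronecker

theorem of_one_mul_of_one {R ι : Type*} [Semiring R] [Fintype ι] :
    (of 1 : Matrix ι ι R) * of 1 = (Fintype.card ι : R) • of 1 := by
  ext i j
  simp [mul_apply]

section OneKroneckerAddOfOneKronecker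

variable {R ι n : Type*} [Fintype ι] [DecidableEq ι] [Fintype n] [DecidableEq n]

theorem one_kronecker_add_of_one_kronecker_mul [CommRing R] (A B C D : Matrix n n R) :
    ((1 : Matrix ι ι R) ⊗ₖ A + of 1 ⊗ₖ B) * (1 ⊗ₖ C + of 1 ⊗ₖ D) =
      1 ⊗ₖ (A * C) + of 1 ⊗ₖ (A * D + B * C + (Fintype.card ι : R) • (B * D)) := by
  simp only [add_mul, mul_add, ← mul_kronecker_mul, one_mul, mul_one, of_one_mul_of_one,
    smul_kronecker, kronecker_smul, kronecker_add]
  abel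

theorem one_kronecker_add_of_one_kronecker_mul_eq_one [Field R] (A B : Matrix n n R)
    (hcard : (Fintype.card ι : R) ≠ 0) (hA : IsUnit A)
    (hAB : IsUnit (A + (Fintype.card ι : R) • B)) :
    ((1 : Matrix ι ι R) ⊗ₖ A + of 1 ⊗ₖ B) *
        (1 ⊗ₖ A⁻¹ +
          of 1 ⊗ₖ ((Fintype.card ι : R)⁻¹ • ((A + (Fintype.card ι : R) • B)⁻¹ - A⁻¹))) = 1 := by
  set c : R := (Fintype.card ι : R)
  set E := c⁻¹ • ((A + c • B)⁻¹ - A⁻¹)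
  have hA' : A * A⁻¹ = 1 := mul_nonsing_inv A ((isUnit_iff_isUnit_det A).mp hA)
  have hAB' : (A + c • B) * (A + c • B)⁻¹ = 1 :=
    mul_nonsing_inv _ ((isUnit_iff_isUnit_det _).mp hAB)
  have hE : (A + c • B) * E = -(B * A⁻¹) := by
    rw [Matrix.mul_smul, mul_sub, hAB', add_mul, hA', smul_mul_assoc, sub_add_cancel_left,
      smul_neg, smul_smul, inv_mul_cancel₀ hcard, one_smul]
  have hoff : A * E + B * A⁻¹ + c • (B * E) = 0 := by
    rw [← neg_add_cancel (B * A⁻¹), ← hE, add_mul, smul_mul_assoc]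
    abel
  rw [one_kronecker_add_of_one_kronecker_mul, hA', hoff, kronecker_zero, add_zero,
    one_kronecker_one]

end OneKroneckerAddOfOneKronecker

theorem blockConst_eq_kronecker {N m : ℕ} (F K : Matrix (Fin m) (Fin m) ℝ) :
    blockConst N m F K = 1 ⊗ₖ (F - K) + of 1 ⊗ₖ K := by
  ext ⟨i, a⟩ ⟨j, b⟩
  by_cases h : i = j <;> simp [blockConst, one_apply, h]

theorem blockConst_inverse_general (m N : ℕ) (hN : 1 ≤ N)
    (F K : Matrix (Fin m) (Fin m) ℝ)
    (h1 : IsUnit (F - K)) (h2 : IsUnit (F + ((N : ℝ) - 1) • K)) :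
    IsUnit (blockConst N m F K) ∧
    (blockConst N m F K)⁻¹ =
      blockConst N m
        ((1 / (N : ℝ)) • ((F + ((N : ℝ) - 1) • K)⁻¹ - (F - K)⁻¹) + (F - K)⁻¹)
        ((1 / (N : ℝ)) • ((F + ((N : ℝ) - 1) • K)⁻¹ - (F - K)⁻¹)) := by
  set E := (1 / (N : ℝ)) • ((F + ((N : ℝ) - 1) • K)⁻¹ - (F - K)⁻¹)
  have hS : F + ((N : ℝ) - 1) • K = F - K + (N : ℝ) • K := by module
  have hmul := one_kronecker_add_of_one_kronecker_mul_eq_one (ι := Fin N) (F - K) K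
    (by simpa using Nat.one_le_iff_ne_zero.mp hN) h1 (by simpa [hS] using h2)
  rw [Fintype.card_fin] at hmul
  have hinv : blockConst N m F K * blockConst N m (E + (F - K)⁻¹) E = 1 := by
    rw [blockConst_eq_kronecker, blockConst_eq_kronecker, add_sub_cancel_left]
    simpa only [E, one_div, hS] using hmul
  exact ⟨.of_mul_eq_one _ hinv, inv_eq_right_inv hinv⟩

/-- inverse of a block matrix with constant diagonal block F and constant
off-diagonal block K. -/
theorem blockConst_inverse (m N : ℕ) (hm : 1 ≤ m) (hN : 1 ≤ N)
    (F K : Matrix (Fin m) (Fin m) ℝ)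
    (h1 : IsUnit (F - K)) (h2 : IsUnit (F + ((N : ℝ) - 1) • K)) :
    IsUnit (blockConst N m F K) ∧
    (blockConst N m F K)⁻¹ =
      blockConst N m
        ((1 / (N : ℝ)) • ((F + ((N : ℝ) - 1) • K)⁻¹ - (F - K)⁻¹) + (F - K)⁻¹)
        ((1 / (N : ℝ)) • ((F + ((N : ℝ) - 1) • K)⁻¹ - (F - K)⁻¹)) :=
  blockConst_inverse_general m N hN F K h1 h2

end LQ
end

section
/- Suppose the limiting system (ODE-Λ) has a solution (Λ₁, Λ₂) on [0, T] and define Θ = ℛ₁(Λ₁)⁻¹BᵀΛ₁ and Θ̂ = I_N ⊗ Θ. Then for every N ≥ 1 the linear terminal value problem (ODE-P̌₁): −d𝐏̌₁/dt = Θ̂ᵀ(𝐑 + 𝓜₂(2𝐏̌₁))Θ̂ + 𝐏̌₁(𝐀 − 𝐁̂Θ̂) + (𝐀 − 𝐁̂Θ̂)ᵀ𝐏̌₁ + 𝐐 on [0,T], 𝐏̌₁(T) = 𝐐_f, has a unique solution 𝐏̌₁ : [0,T] → ℝ^{Nn×Nn}, and this solution has the two-block representation: there exist symmetric Π̌₁^N(t),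 Π̌₂^N(t) ∈ ℝ^{n×n} such that all diagonal n×n blocks of 𝐏̌₁(t) equal Π̌₁^N(t) and all off-diagonal n×n blocks of 𝐏̌₁(t) equal Π̌₂^N(t), for every t ∈ [0,T]. -/
open Matrix Set

/-!
(ODE-P̌₁) is a linear terminal value problem whose coefficients depend continuously on `t`
through `Θ(t)`, hence it has a unique solution on `[0, T]`: the field is uniformly Lipschitz on
the compact time interval, local Picard–Lindelöf solutions can be glued, and Grönwall gives
uniqueness. The equation and its terminal value `𝐐_f` are invariant under transposition and
under simultaneous permutation of the `N` block rows and columns, so by uniqueness the solution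
is symmetric and invariant under every block permutation; such a matrix has a single diagonal
block and a single off-diagonal block.
-/

open scoped NNReal

section LinearODE

variable {E : Type*} [NormedAddCommGroup E] [NormedSpace ℝ E] {v : ℝ → E → E} {a b : ℝ}

theorem exists_isIntegralCurveOn_Icc_of_mul_le_half [CompleteSpace E] {K : ℝ≥0} (hab : a ≤ b)
    (hv : ∀ t ∈ Icc a b, LipschitzWith K (v t)) (hcont : ∀ x, ContinuousOn (v · x) (Icc a b))
    (hsmall : K * (b - a) ≤ 1 / 2) (x : E) :
    ∃ α : ℝ → E, α b = x ∧ IsIntegralCurveOn α v (Icc a b) := by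
  obtain ⟨M, hM⟩ := isCompact_Icc.exists_bound_of_continuousOn (hcont x)
  have hM0 : 0 ≤ M := (norm_nonneg _).trans (hM b ⟨hab, le_rfl⟩)
  have hba : 0 ≤ b - a := sub_nonneg.2 hab
  -- on the ball of radius `ρ = 2M(b - a)` the field is bounded by `M + Kρ`,
  -- and `(M + Kρ)(b - a) ≤ ρ` because `K(b - a) ≤ 1 / 2`
  let ρ : ℝ≥0 := ⟨2 * M * (b - a), by positivity⟩
  let L : ℝ≥0 := ⟨M + K * ρ, by positivity⟩
  have hpl : IsPicardLindelof v (tmin := a) (tmax := b) ⟨b, hab, le_rfl⟩ x ρ 0 L K := by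
    refine ⟨fun t ht => (hv t ht).lipschitzOnWith, fun y _ => hcont y, fun t ht y hy => ?_, ?_⟩
    · calc ‖v t y‖ ≤ ‖v t x‖ + ‖v t y - v t x‖ := norm_le_norm_add_norm_sub' _ _
        _ ≤ M + K * ‖y - x‖ := by
          gcongr
          · exact hM t ht
          · simpa only [dist_eq_norm] using (hv t ht).dist_le_mul y x
        _ ≤ M + K * ρ := by gcongr; simpa [dist_eq_norm] using hy
    · show (M + K * (2 * M * (b - a))) * max (b - b) (b - a) ≤ 2 * M * (b - a) - 0
      rw [sub_self, max_eq_right hba]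
      nlinarith [mul_le_mul_of_nonneg_right hsmall (by positivity : 0 ≤ 2 * M * (b - a))]
  exact hpl.exists_eq_forall_mem_Icc_hasDerivWithinAt₀

theorem IsIntegralCurveOn.piecewise_Icc {α β : ℝ → E} {c : ℝ} (hac : a ≤ c) (hcb : c ≤ b)
    (hα : IsIntegralCurveOn α v (Icc a c)) (hβ : IsIntegralCurveOn β v (Icc c b))
    (hc : α c = β c) :
    IsIntegralCurveOn (fun t => if t < c then α t else β t) v (Icc a b) := by
  set γ : ℝ → E := fun t => if t < c then α t else β t
  have hγα : EqOn γ α (Icc a c) := fun t ht => by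
    rcases ht.2.lt_or_eq with h | rfl
    · simp [γ, h]
    · simp [γ, hc]
  have hγβ : EqOn γ β (Icc c b) := fun t ht => by simp [γ, not_lt.2 ht.1]
  intro t ht
  rw [← Icc_union_Icc_eq_Icc hac hcb]
  refine HasDerivWithinAt.union ?_ ?_
  · by_cases htc : t ≤ c
    · rw [hγα ⟨ht.1, htc⟩]
      exact (hα t ⟨ht.1, htc⟩).congr hγα (hγα ⟨ht.1, htc⟩)
    · exact HasFDerivWithinAt.of_notMem_closure <| by
        rw [isClosed_Icc.closure_eq]; exact fun h => htc h.2
  · by_cases hct : c ≤ t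
    · rw [hγβ ⟨hct, ht.2⟩]
      exact (hβ t ⟨hct, ht.2⟩).congr hγβ (hγβ ⟨hct, ht.2⟩)
    · exact HasFDerivWithinAt.of_notMem_closure <| by
        rw [isClosed_Icc.closure_eq]; exact fun h => hct h.1

theorem exists_isIntegralCurveOn_Icc_of_lipschitzWith [CompleteSpace E] {K : ℝ≥0}
    (hv : ∀ t ∈ Icc a b, LipschitzWith K (v t)) (hcont : ∀ x, ContinuousOn (v · x) (Icc a b))
    (x : E) : ∃ α : ℝ → E, α b = x ∧ IsIntegralCurveOn α v (Icc a b) := by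
  -- glue local solutions backwards from `b` over steps of length `δ`
  set δ : ℝ := 1 / (2 * K + 1)
  have hδ : 0 < δ := by positivity
  have hKδ : K * δ ≤ 1 / 2 := by
    rw [mul_one_div, div_le_div_iff₀ (by positivity) two_pos]; linarith
  have hstep : ∀ j : ℕ, ∀ c ∈ Icc a b, b - c ≤ j * δ →
      ∃ α : ℝ → E, α b = x ∧ IsIntegralCurveOn α v (Icc c b) := by
    intro j
    induction j with
    | zero =>
      intro c hc hcb
      obtain rfl : c = b := le_antisymm hc.2 (by simpa using hcb)
      exact exists_isIntegralCurveOn_Icc_of_mul_le_half le_rfl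
        (fun t ht => hv t ⟨hc.1.trans ht.1, ht.2⟩)
        (fun y => (hcont y).mono (Icc_subset_Icc_left hc.1)) (by simp) x
    | succ j ih =>
      intro c hc hcb
      set d := min b (c + δ)
      have hcd : c ≤ d := le_min hc.2 (by linarith)
      have hdb : d ≤ b := min_le_left _ _
      obtain ⟨α, hαb, hα⟩ := ih d ⟨hc.1.trans hcd, hdb⟩ <| by
        rcases min_choice b (c + δ) with h | h <;> simp only [d, h] <;> push_cast at hcb <;>
          nlinarith
      obtain ⟨β, hβd, hβ⟩ := exists_isIntegralCurveOn_Icc_of_mul_le_half hcd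
        (fun t ht => hv t ⟨hc.1.trans ht.1, ht.2.trans hdb⟩)
        (fun y => (hcont y).mono (Icc_subset_Icc hc.1 hdb))
        (hKδ.trans' (by gcongr; linarith [min_le_right b (c + δ)])) (α d)
      exact ⟨_, by simp [not_lt.2 hdb, hαb], hβ.piecewise_Icc hcd hdb hα hβd⟩
  rcases le_or_gt a b with hab | hba
  · refine hstep ⌈(b - a) / δ⌉₊ a ⟨le_rfl, hab⟩ ?_
    rw [← div_le_iff₀ hδ]
    exact Nat.le_ceil _
  · exact ⟨fun _ => x, rfl, by simp [Icc_eq_empty_of_lt hba, IsIntegralCurveOn]⟩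

theorem IsIntegralCurveOn.eqOn_Icc_of_eq_right {K : ℝ≥0} {α β : ℝ → E}
    (hv : ∀ t ∈ Icc a b, LipschitzWith K (v t)) (hα : IsIntegralCurveOn α v (Icc a b))
    (hβ : IsIntegralCurveOn β v (Icc a b)) (hb : α b = β b) : EqOn α β (Icc a b) := by
  have hle : ∀ t ∈ Ioc a b, Icc a b ∈ nhdsWithin t (Iic t) := fun t ht =>
    Filter.mem_of_superset (Icc_mem_nhdsLE ht.1) (Icc_subset_Icc_right ht.2)
  exact ODE_solution_unique_of_mem_Icc_left (s := fun _ => univ)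
    (fun t ht => (hv t (Ioc_subset_Icc_self ht)).lipschitzOnWith) hα.continuousOn
    (fun t ht => (hα t (Ioc_subset_Icc_self ht)).mono_of_mem_nhdsWithin (hle t ht))
    (fun _ _ => mem_univ _) hβ.continuousOn
    (fun t ht => (hβ t (Ioc_subset_Icc_self ht)).mono_of_mem_nhdsWithin (hle t ht))
    (fun _ _ => mem_univ _) hb

theorem exists_lipschitzWith_of_isLinearMap_sub [FiniteDimensional ℝ E] {s : Set ℝ}
    (hs : IsCompact s) (hlin : ∀ t ∈ s, IsLinearMap ℝ fun x => v t x - v t 0)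
    (hcont : ∀ x, ContinuousOn (v · x) s) : ∃ K : ℝ≥0, ∀ t ∈ s, LipschitzWith K (v t) := by
  let ℓ : s → E →L[ℝ] E := fun t =>
    LinearMap.toContinuousLinearMap (IsLinearMap.mk' _ (hlin t t.2))
  obtain ⟨C, hC⟩ := banach_steinhaus (g := ℓ) fun x => by
    obtain ⟨C, hC⟩ := hs.exists_bound_of_continuousOn ((hcont x).sub (hcont 0))
    exact ⟨C, fun t => hC t t.2⟩
  refine ⟨C.toNNReal, fun t ht => LipschitzWith.of_dist_le_mul fun x y => ?_⟩
  have hxy : v t x - v t y = ℓ ⟨t, ht⟩ (x - y) := by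
    simp only [ℓ, map_sub, LinearMap.coe_toContinuousLinearMap', IsLinearMap.mk'_apply]
    abel
  rw [dist_eq_norm, dist_eq_norm, hxy]
  exact ((ℓ ⟨t, ht⟩).le_of_opNorm_le (hC _) _).trans (by gcongr; exact Real.le_coe_toNNReal C)

theorem exists_unique_isIntegralCurveOn_Icc_of_isLinearMap_sub [FiniteDimensional ℝ E]
    (hlin : ∀ t ∈ Icc a b, IsLinearMap ℝ fun x => v t x - v t 0)
    (hcont : ∀ x, ContinuousOn (v · x) (Icc a b)) (x : E) :
    ∃ α : ℝ → E, α b = x ∧ IsIntegralCurveOn α v (Icc a b) ∧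
      ∀ β : ℝ → E, β b = x → IsIntegralCurveOn β v (Icc a b) → EqOn β α (Icc a b) := by
  obtain ⟨K, hK⟩ := exists_lipschitzWith_of_isLinearMap_sub isCompact_Icc hlin hcont
  obtain ⟨α, hαb, hα⟩ := exists_isIntegralCurveOn_Icc_of_lipschitzWith hK hcont x
  exact ⟨α, hαb, hα, fun β hβb hβ => hβ.eqOn_Icc_of_eq_right hK hα (hβb.trans hαb.symm)⟩

end LinearODE

section MatrixDerivative

attribute [local instance] Matrix.normedAddCommGroup Matrix.normedSpace

lemma hasDerivWithinAt_matrix_iff {m m' : Type*} [Fintype m] [Fintype m']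
    {f : ℝ → Matrix m m' ℝ} {f' : Matrix m m' ℝ} {s : Set ℝ} {t : ℝ} :
    HasDerivWithinAt f f' s t ↔ ∀ i j, HasDerivWithinAt (fun u => f u i j) (f' i j) s t :=
  hasDerivWithinAt_pi.trans (forall_congr' fun _ => hasDerivWithinAt_pi)

end MatrixDerivative

namespace LQ

section BlockPermutation

variable {N : ℕ} {R α β γ : Type*}

def permuteBlocks (σ : Equiv.Perm (Fin N)) (M : Matrix (Fin N × α) (Fin N × β) R) :
    Matrix (Fin N × α) (Fin N × β) R :=
  M.submatrix (σ.prodCongr (Equiv.refl α)) (σ.prodCongr (Equiv.refl β))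

variable (σ : Equiv.Perm (Fin N))

@[simp] lemma permuteBlocks_apply (M : Matrix (Fin N × α) (Fin N × β) R) (x y) :
    permuteBlocks σ M x y = M (σ x.1, x.2) (σ y.1, y.2) := rfl

lemma permuteBlocks_add [Add R] (M M' : Matrix (Fin N × α) (Fin N × β) R) :
    permuteBlocks σ (M + M') = permuteBlocks σ M + permuteBlocks σ M' := rfl

lemma permuteBlocks_sub [Sub R] (M M' : Matrix (Fin N × α) (Fin N × β) R) :
    permuteBlocks σ (M - M') = permuteBlocks σ M - permuteBlocks σ M' := rfl

lemma permuteBlocks_smul {S : Type*} [SMul S R] (c : S) (M : Matrix (Fin N × α) (Fin N × β) R) :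
    permuteBlocks σ (c • M) = c • permuteBlocks σ M := rfl

lemma permuteBlocks_transpose (M : Matrix (Fin N × α) (Fin N × β) R) :
    (permuteBlocks σ M)ᵀ = permuteBlocks σ Mᵀ := rfl

lemma permuteBlocks_sum [AddCommMonoid R] {ι : Type*} (s : Finset ι)
    (M : ι → Matrix (Fin N × α) (Fin N × β) R) :
    permuteBlocks σ (∑ i ∈ s, M i) = ∑ i ∈ s, permuteBlocks σ (M i) := by
  ext x y
  simp only [permuteBlocks_apply, Matrix.sum_apply]

lemma permuteBlocks_mul [AddCommMonoid R] [Mul R] [Fintype β]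
    (M : Matrix (Fin N × α) (Fin N × β) R)
    (M' : Matrix (Fin N × β) (Fin N × γ) R) :
    permuteBlocks σ (M * M') = permuteBlocks σ M * permuteBlocks σ M' :=
  (submatrix_mul_equiv M M' _ _ _).symm

end BlockPermutation

lemma continuous_kronIN (N : ℕ) {a b : ℕ} : Continuous (kronIN N : Matrix (Fin a) (Fin b) ℝ → _) :=
  continuous_matrix fun x y => by
    simp only [kronIN, of_apply]
    split_ifs <;> fun_prop

lemma isSymm_transpose_mul_mul_sub_sub {m : Type*} [Fintype m] {S : Matrix m m ℝ} (hS : S.IsSymm)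
    (Γ : Matrix m m ℝ) : (Γᵀ * S * Γ - S * Γ - Γᵀ * S).IsSymm := by
  simp only [IsSymm, transpose_sub, transpose_mul, transpose_transpose, hS.eq, Matrix.mul_assoc]
  abel

namespace Params

variable {n n₁ : ℕ} (p : Params n n₁) {N : ℕ}

lemma M2_add (Z W : Matrix (Fin N × Fin n) (Fin N × Fin n) ℝ) :
    p.M2 N (Z + W) = p.M2 N Z + p.M2 N W := by
  simp only [M2, Matrix.mul_add, Matrix.add_mul, Finset.sum_add_distrib, smul_add]
  abel

lemma M2_smul (c : ℝ) (Z : Matrix (Fin N × Fin n) (Fin N × Fin n) ℝ) :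
    p.M2 N (c • Z) = c • p.M2 N Z := by
  simp only [M2, Matrix.mul_smul, Matrix.smul_mul, ← Finset.smul_sum, smul_add, smul_comm c]

lemma M2_zero : p.M2 N 0 = 0 := by
  simpa using p.M2_smul 0 0

lemma M2_transpose (Z : Matrix (Fin N × Fin n) (Fin N × Fin n) ℝ) :
    (p.M2 N Z)ᵀ = p.M2 N Zᵀ := by
  simp only [M2, transpose_add, transpose_smul, transpose_sum, transpose_mul,
    transpose_transpose, Matrix.mul_assoc]

lemma isLinearMap_neg_Pcheck1RHS_sub (Θ : Matrix (Fin n₁) (Fin n) ℝ) :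
    IsLinearMap ℝ fun X => -p.Pcheck1RHS N Θ X - -p.Pcheck1RHS N Θ 0 where
  map_add X Y := by
    simp only [Pcheck1RHS, smul_add, smul_zero, M2_zero, M2_add, Matrix.mul_add, Matrix.add_mul,
      Matrix.zero_mul, Matrix.mul_zero]
    abel
  map_smul c X := by
    simp only [Pcheck1RHS, smul_comm (2 : ℝ) c, M2_smul, smul_zero, M2_zero, Matrix.mul_add,
      Matrix.add_mul, Matrix.zero_mul, Matrix.mul_zero, Matrix.mul_smul, Matrix.smul_mul]
    module

lemma continuous_Pcheck1RHS (X : Matrix (Fin N × Fin n) (Fin N × Fin n) ℝ) :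
    Continuous fun Θ => p.Pcheck1RHS N Θ X := by
  have := continuous_kronIN N (a := n₁) (b := n)
  unfold Pcheck1RHS
  fun_prop

lemma permuteBlocks_bigA (σ : Equiv.Perm (Fin N)) : permuteBlocks σ (p.bigA N) = p.bigA N := by
  ext; simp [bigA]

lemma permuteBlocks_bigQ (σ : Equiv.Perm (Fin N)) : permuteBlocks σ (p.bigQ N) = p.bigQ N := by
  ext; simp [bigQ]

lemma permuteBlocks_bigQf (σ : Equiv.Perm (Fin N)) : permuteBlocks σ (p.bigQf N) = p.bigQf N := by
  ext; simp [bigQf]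

lemma permuteBlocks_bigR (σ : Equiv.Perm (Fin N)) : permuteBlocks σ (p.bigR N) = p.bigR N := by
  ext; simp [bigR]

lemma permuteBlocks_bigBhat (σ : Equiv.Perm (Fin N)) :
    permuteBlocks σ (p.bigBhat N) = p.bigBhat N := by
  ext; simp [bigBhat]

lemma permuteBlocks_kronIN {a b : ℕ} (σ : Equiv.Perm (Fin N)) (M : Matrix (Fin a) (Fin b) ℝ) :
    permuteBlocks σ (kronIN N M) = kronIN N M := by
  ext; simp [kronIN]

lemma bigB_mul_bigE_apply (i : Fin N) (x : Fin N × Fin n) (y : Fin N × Fin n₁) :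
    (p.bigB N i * p.bigE N i) x y = if x.1 = i ∧ y.1 = i then p.B1 x.2 y.2 else 0 := by
  simp only [Matrix.mul_apply, bigB, bigE, of_apply]
  by_cases hx : x.1 = i <;> by_cases hy : y.1 = i <;> simp [hx, hy, mul_ite, eq_comm]

lemma permuteBlocks_bigB_mul_bigE (σ : Equiv.Perm (Fin N)) (i : Fin N) :
    permuteBlocks σ (p.bigB N i * p.bigE N i) = p.bigB N (σ.symm i) * p.bigE N (σ.symm i) := by
  ext x y
  simp [bigB_mul_bigE_apply, Equiv.eq_symm_apply]

lemma permuteBlocks_bigB0_mul_bigIhat (σ : Equiv.Perm (Fin N)) :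
    permuteBlocks σ (p.bigB0 N * p.bigIhat N) = p.bigB0 N * p.bigIhat N := by
  ext x y
  simp [Matrix.mul_apply, bigB0, bigIhat, mul_ite, eq_comm]

lemma M2_eq_sum_transpose_mul_mul (Z : Matrix (Fin N × Fin n) (Fin N × Fin n) ℝ) :
    p.M2 N Z = (1 / 2 : ℝ) •
        (∑ i, (p.bigB N i * p.bigE N i)ᵀ * Z * (p.bigB N i * p.bigE N i))
      + (1 / 2 : ℝ) • ((p.bigB0 N * p.bigIhat N)ᵀ * Z * (p.bigB0 N * p.bigIhat N)) := by
  simp only [M2, transpose_mul, Matrix.mul_assoc]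

lemma M2_permuteBlocks (σ : Equiv.Perm (Fin N)) (Z : Matrix (Fin N × Fin n) (Fin N × Fin n) ℝ) :
    p.M2 N (permuteBlocks σ Z) = permuteBlocks σ (p.M2 N Z) := by
  simp only [M2_eq_sum_transpose_mul_mul, permuteBlocks_add, permuteBlocks_smul, permuteBlocks_sum,
    permuteBlocks_mul, ← permuteBlocks_transpose, permuteBlocks_bigB_mul_bigE,
    permuteBlocks_bigB0_mul_bigIhat]
  congr 2
  exact (Equiv.sum_comp σ.symm fun i =>
    (p.bigB N i * p.bigE N i)ᵀ * permuteBlocks σ Z * (p.bigB N i * p.bigE N i)).symm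

lemma Pcheck1RHS_permuteBlocks (σ : Equiv.Perm (Fin N)) (Θ : Matrix (Fin n₁) (Fin n) ℝ)
    (X : Matrix (Fin N × Fin n) (Fin N × Fin n) ℝ) :
    p.Pcheck1RHS N Θ (permuteBlocks σ X) = permuteBlocks σ (p.Pcheck1RHS N Θ X) := by
  simp only [Pcheck1RHS, permuteBlocks_add, permuteBlocks_mul, permuteBlocks_sub,
    ← permuteBlocks_smul, M2_permuteBlocks, ← permuteBlocks_transpose, permuteBlocks_bigA,
    permuteBlocks_bigQ, permuteBlocks_bigR, permuteBlocks_kronIN, permuteBlocks_bigBhat]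

variable {p}

lemma isSymm_bigQ (hQ : p.Q.IsSymm) : (p.bigQ N).IsSymm := by
  have hQΓ : p.QΓ.IsSymm := isSymm_transpose_mul_mul_sub_sub hQ p.Γ
  ext x y
  simp only [transpose_apply, bigQ, of_apply, hQ.apply, hQΓ.apply, eq_comm]

lemma isSymm_bigQf (hQf : p.Qf.IsSymm) : (p.bigQf N).IsSymm := by
  have hQfΓ : p.QfΓ.IsSymm := isSymm_transpose_mul_mul_sub_sub hQf p.Γf
  ext x y
  simp only [transpose_apply, bigQf, of_apply, hQf.apply, hQfΓ.apply, eq_comm]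

lemma isSymm_bigR (hR : p.R.IsSymm) : (p.bigR N).IsSymm := by
  ext x y
  simp only [transpose_apply, bigR, of_apply, hR.apply, eq_comm]

lemma Pcheck1RHS_transpose (hQ : p.Q.IsSymm) (hR : p.R.IsSymm) (Θ : Matrix (Fin n₁) (Fin n) ℝ)
    (X : Matrix (Fin N × Fin n) (Fin N × Fin n) ℝ) :
    p.Pcheck1RHS N Θ Xᵀ = (p.Pcheck1RHS N Θ X)ᵀ := by
  simp only [Pcheck1RHS, transpose_add, transpose_mul, transpose_sub, transpose_transpose,
    transpose_smul, M2_transpose, (isSymm_bigQ hQ).eq, (isSymm_bigR hR).eq, Matrix.mul_assoc]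
  abel

lemma IsSolPcheck1.transpose {Λ₁ : ℝ → Matrix (Fin n) (Fin n) ℝ}
    {P : ℝ → Matrix (Fin N × Fin n) (Fin N × Fin n) ℝ} (hP : p.IsSolPcheck1 N Λ₁ P)
    (hQ : p.Q.IsSymm) (hQf : p.Qf.IsSymm) (hR : p.R.IsSymm) :
    p.IsSolPcheck1 N Λ₁ fun t => (P t)ᵀ := by
  refine ⟨show (P p.T)ᵀ = _ by rw [hP.1, (isSymm_bigQf hQf).eq], fun t ht x y => ?_⟩
  rw [Pcheck1RHS_transpose hQ hR]
  exact hP.2 t ht y x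

lemma IsSolPcheck1.permuteBlocks {Λ₁ : ℝ → Matrix (Fin n) (Fin n) ℝ}
    {P : ℝ → Matrix (Fin N × Fin n) (Fin N × Fin n) ℝ} (hP : p.IsSolPcheck1 N Λ₁ P)
    (σ : Equiv.Perm (Fin N)) :
    p.IsSolPcheck1 N Λ₁ fun t => LQ.permuteBlocks σ (P t) := by
  refine ⟨show LQ.permuteBlocks σ (P p.T) = _ by rw [hP.1, permuteBlocks_bigQf],
    fun t ht x y => ?_⟩
  rw [Pcheck1RHS_permuteBlocks]
  exact hP.2 t ht _ _

lemma IsSolLim.continuousOn_Theta {Λ₁ Λ₂ : ℝ → Matrix (Fin n) (Fin n) ℝ}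
    (h : p.IsSolLim Λ₁ Λ₂) : ContinuousOn (fun t => p.Theta (Λ₁ t)) (Icc 0 p.T) := by
  obtain ⟨-, hpos, -, -, hΛ₁', -⟩ := h
  have hΛ₁ : ContinuousOn Λ₁ (Icc 0 p.T) := fun t ht => continuousWithinAt_pi.2 fun i =>
    continuousWithinAt_pi.2 fun j => (hΛ₁' t ht i j).continuousWithinAt
  have hR₁ : ContinuousOn (fun t => p.R1 (Λ₁ t)) (Icc 0 p.T) := by
    unfold R1
    fun_prop
  have hR₁inv : ContinuousOn (fun t => (p.R1 (Λ₁ t))⁻¹) (Icc 0 p.T) := fun t ht =>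
    (continuousAt_matrix_inv _ <| by
      rw [Ring.inverse_eq_inv']
      exact continuousAt_inv₀ (hpos t ht).1.det_pos.ne').comp_continuousWithinAt (hR₁ t ht)
  unfold Theta
  fun_prop

section

attribute [local instance] Matrix.normedAddCommGroup Matrix.normedSpace

lemma isSolPcheck1_iff {Λ₁ : ℝ → Matrix (Fin n) (Fin n) ℝ}
    {P : ℝ → Matrix (Fin N × Fin n) (Fin N × Fin n) ℝ} :
    p.IsSolPcheck1 N Λ₁ P ↔ P p.T = p.bigQf N ∧
      IsIntegralCurveOn P (fun t X => -p.Pcheck1RHS N (p.Theta (Λ₁ t)) X) (Icc 0 p.T) :=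
  and_congr_right' (forall₂_congr fun _ _ => hasDerivWithinAt_matrix_iff.symm)

theorem exists_unique_isSolPcheck1 {Λ₁ : ℝ → Matrix (Fin n) (Fin n) ℝ}
    (hΘ : ContinuousOn (fun t => p.Theta (Λ₁ t)) (Icc 0 p.T)) :
    ∃ P, p.IsSolPcheck1 N Λ₁ P ∧
      ∀ P', p.IsSolPcheck1 N Λ₁ P' → ∀ t ∈ Icc (0 : ℝ) p.T, P' t = P t := by
  obtain ⟨P, hPT, hP, huniq⟩ := exists_unique_isIntegralCurveOn_Icc_of_isLinearMap_sub
    (fun t _ => p.isLinearMap_neg_Pcheck1RHS_sub _)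
    (fun X => ((p.continuous_Pcheck1RHS X).comp_continuousOn hΘ).neg) (p.bigQf N)
  refine ⟨P, isSolPcheck1_iff.2 ⟨hPT, hP⟩, fun P' hP' => ?_⟩
  rw [isSolPcheck1_iff] at hP'
  exact huniq P' hP'.1 hP'.2

end

end Params

lemma exists_perm_apply_eq_and_apply_eq {α : Type*} [DecidableEq α] {a b c d : α}
    (hab : a ≠ b) (hcd : c ≠ d) : ∃ σ : Equiv.Perm α, σ a = c ∧ σ b = d := by
  refine ⟨(Equiv.swap a c).trans (Equiv.swap (Equiv.swap a c b) d), ?_, ?_⟩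
  · have : c ≠ Equiv.swap a c b := fun h =>
      hab ((Equiv.swap a c).injective ((Equiv.swap_apply_left a c).trans h))
    simp [Equiv.swap_apply_of_ne_of_ne this hcd]
  · simp

theorem exists_isSymm_eq_blockConst {N m : ℕ} {M : Matrix (Fin N × Fin m) (Fin N × Fin m) ℝ}
    (hM : M.IsSymm) (hperm : ∀ σ : Equiv.Perm (Fin N), permuteBlocks σ M = M) :
    ∃ F K, F.IsSymm ∧ K.IsSymm ∧ M = blockConst N m F K := by
  have hσ (σ : Equiv.Perm (Fin N)) (i j k l) : M (σ i, k) (σ j, l) = M (i, k) (j, l) :=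
    congr_fun (congr_fun (hperm σ) (i, k)) (j, l)
  obtain ⟨F, hF, hdiag⟩ : ∃ F : Matrix (Fin m) (Fin m) ℝ,
      F.IsSymm ∧ ∀ i k l, M (i, k) (i, l) = F k l := by
    rcases Nat.eq_zero_or_pos N with rfl | hN
    · exact ⟨0, isSymm_zero, fun i => i.elim0⟩
    · let i₀ : Fin N := ⟨0, hN⟩
      refine ⟨of fun k l => M (i₀, k) (i₀, l), ?_, fun i k l => ?_⟩
      · ext k l
        exact hM.apply (i₀, k) (i₀, l)
      · simpa using hσ (Equiv.swap i₀ i) i₀ i₀ k l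
  obtain ⟨K, hK, hoff⟩ : ∃ K : Matrix (Fin m) (Fin m) ℝ,
      K.IsSymm ∧ ∀ i j, i ≠ j → ∀ k l, M (i, k) (j, l) = K k l := by
    by_cases hN : 1 < N
    · let i₀ : Fin N := ⟨0, by omega⟩
      let i₁ : Fin N := ⟨1, hN⟩
      have h01 : i₀ ≠ i₁ := by simp [i₀, i₁, Fin.ext_iff]
      refine ⟨of fun k l => M (i₀, k) (i₁, l), ?_, fun i j hij k l => ?_⟩
      · ext k l
        simpa [hM.apply (i₀, l) (i₁, k)] using hσ (Equiv.swap i₀ i₁) i₀ i₁ k l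
      · obtain ⟨σ, rfl, rfl⟩ := exists_perm_apply_eq_and_apply_eq h01 hij
        exact hσ σ i₀ i₁ k l
    · exact ⟨0, isSymm_zero, fun i j hij => absurd (Fin.ext (by omega)) hij⟩
  refine ⟨F, K, hF, hK, ?_⟩
  ext ⟨i, k⟩ ⟨j, l⟩
  by_cases hij : i = j
  · subst hij
    simp [blockConst, hdiag]
  · simp [blockConst, hij, hoff i j hij]

/-- the linear terminal value problem (ODE-P̌₁) has a unique solution on
[0,T], with common symmetric diagonal blocks and common symmetric off-diagonal blocks. -/
theorem solPcheck1_exists_unique_two_block {n n₁ : ℕ} (p : Params n n₁) (hp : p.Standing)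
    (Λ₁ Λ₂ : ℝ → Matrix (Fin n) (Fin n) ℝ) (hLim : p.IsSolLim Λ₁ Λ₂) :
    ∀ N : ℕ, 1 ≤ N →
      ∃ P1 : ℝ → Matrix (Fin N × Fin n) (Fin N × Fin n) ℝ,
        p.IsSolPcheck1 N Λ₁ P1 ∧
        (∀ P1' : ℝ → Matrix (Fin N × Fin n) (Fin N × Fin n) ℝ,
          p.IsSolPcheck1 N Λ₁ P1' → ∀ t ∈ Icc (0 : ℝ) p.T, P1' t = P1 t) ∧
        ∃ Pi1 Pi2 : ℝ → Matrix (Fin n) (Fin n) ℝ,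
          ∀ t ∈ Icc (0 : ℝ) p.T,
            (Pi1 t).IsSymm ∧ (Pi2 t).IsSymm ∧
            (∀ (i : Fin N) (k l : Fin n), P1 t (i, k) (i, l) = Pi1 t k l) ∧
            (∀ (i j : Fin N), i ≠ j → ∀ (k l : Fin n),
              P1 t (i, k) (j, l) = Pi2 t k l) := by
  intro N _
  obtain ⟨-, -, -, hQ, hQf, hR⟩ := hp
  obtain ⟨P, hP, huniq⟩ := p.exists_unique_isSolPcheck1 (N := N) hLim.continuousOn_Theta
  have hblock : ∀ t ∈ Icc (0 : ℝ) p.T, ∃ F K, F.IsSymm ∧ K.IsSymm ∧ P t = blockConst N n F K :=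
    fun t ht => exists_isSymm_eq_blockConst (huniq _ (hP.transpose hQ hQf hR) t ht)
      fun σ => huniq _ (hP.permuteBlocks σ) t ht
  choose! Pi1 Pi2 hPi using hblock
  refine ⟨P, hP, huniq, Pi1, Pi2, fun t ht => ?_⟩
  obtain ⟨hF, hK, hPt⟩ := hPi t ht
  exact ⟨hF, hK, fun i k l => by simp [hPt, blockConst],
    fun i j hij k l => by simp [hPt, blockConst, hij]⟩

end LQ
end
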